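/- arXiv:2202.07178 — 5 statements merged into one kernel-verified Lean document; each statement's English description precedes it below -/
import Mathlib

section
/- Let d ≥ 1 and 1 ≤ k ≤ d be integers and let x ∈ ℝ^d. Then the expected squared Euclidean error of the (unscaled) random sparsifier satisfies the exact identity (1 / C(d,k)) · Σ_{ω ⊆ {1,…,d}, |ω| = k} ‖mask_ω(x) − x‖² = (1 − k/d)·‖x‖², where ‖·‖ is the Euclidean norm on ℝ^d. -/
/-!
The error of `mask ω` is the mass of `x` outside `ω`. Each coordinate lies outside exactly
`C(d-1,k)` of the `k`-subsets, so the sum is `C(d-1,k) ‖x‖²`, and `C(d-1,k) / C(d,k) = 1 - k/d`.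
-/

/-- The masked vector `mask ω x` has `j`-th coordinate `x j` if `j ∈ ω` and `0` otherwise. -/
def mask {d : ℕ} (ω : Finset (Fin d)) (x : EuclideanSpace ℝ (Fin d)) :
    EuclideanSpace ℝ (Fin d) :=
  WithLp.toLp 2 (fun j => if j ∈ ω then x j else 0)

open Finset

theorem norm_mask_sub_sq {d : ℕ} (ω : Finset (Fin d)) (x : EuclideanSpace ℝ (Fin d)) :
    ‖mask ω x - x‖ ^ 2 = ∑ j ∈ ωᶜ, x j ^ 2 := by
  rw [EuclideanSpace.real_norm_sq_eq, ← sum_compl_add_sum ω]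
  refine (add_eq_left.mpr (sum_eq_zero fun j hj => by simp [mask, hj])).trans
    (sum_congr rfl fun j hj => ?_)
  simp [mask, mem_compl.mp hj]

theorem Finset.sum_powersetCard_sum_compl {α M : Type*} [Fintype α] [DecidableEq α]
    [AddCommMonoid M] (k : ℕ) (f : α → M) :
    ∑ ω ∈ powersetCard k (univ : Finset α), ∑ j ∈ ωᶜ, f j =
      (Fintype.card α - 1).choose k • ∑ j, f j := by
  rw [sum_comm' (t' := univ) (s' := fun j => powersetCard k (univ.erase j))]
  · simp [sum_const, card_powersetCard, smul_sum]
  · intro ω j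
    simp [subset_erase, and_comm]

theorem Nat.choose_pred_mul (n k : ℕ) : (n - 1).choose k * n = n.choose k * (n - k) := by
  cases n with
  | zero => simp
  | succ n => exact choose_mul_succ_eq n k

theorem Nat.cast_choose_pred {K : Type*} [Field K] [CharZero K] {n k : ℕ} (hn : n ≠ 0)
    (hk : k ≤ n) : ((n - 1).choose k : K) = n.choose k * (1 - k / n) := by
  have h := congrArg (Nat.cast (R := K)) (choose_pred_mul n k)
  push_cast [Nat.cast_sub hk] at h
  field_simp
  linear_combination h

theorem randk_unscaled_error_general (d k : ℕ) (hd : 1 ≤ d) (hkd : k ≤ d)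
    (x : EuclideanSpace ℝ (Fin d)) :
    ((d.choose k : ℝ))⁻¹ *
      ∑ ω ∈ Finset.powersetCard k (Finset.univ : Finset (Fin d)),
        ‖mask ω x - x‖ ^ 2 = (1 - (k : ℝ) / d) * ‖x‖ ^ 2 := by
  have hchoose : (d.choose k : ℝ) ≠ 0 := Nat.cast_ne_zero.mpr (Nat.choose_pos hkd).ne'
  simp_rw [norm_mask_sub_sq, sum_powersetCard_sum_compl, Fintype.card_fin, nsmul_eq_mul,
    Nat.cast_choose_pred (Nat.one_le_iff_ne_zero.mp hd) hkd, ← EuclideanSpace.real_norm_sq_eq]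
  field_simp

/-- The expected squared Euclidean error of the (unscaled) random sparsifier:
`(1 / C(d,k)) · Σ_{|ω| = k} ‖mask_ω(x) − x‖² = (1 − k/d)·‖x‖²`. -/
theorem randk_unscaled_error (d k : ℕ) (hd : 1 ≤ d) (hk1 : 1 ≤ k) (hkd : k ≤ d)
    (x : EuclideanSpace ℝ (Fin d)) :
    ((d.choose k : ℝ))⁻¹ *
      ∑ ω ∈ Finset.powersetCard k (Finset.univ : Finset (Fin d)),
        ‖mask ω x - x‖ ^ 2 = (1 - (k : ℝ) / d) * ‖x‖ ^ 2 :=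
  randk_unscaled_error_general d k hd hkd x
end

section
/- Let d ≥ 1 and 1 ≤ k ≤ d be integers and let x ∈ ℝ^d. Then the expected squared Euclidean error of the scaled random sparsifier satisfies the exact identity (1 / C(d,k)) · Σ_{ω ⊆ {1,…,d}, |ω| = k} ‖(d/k)·mask_ω(x) − x‖² = (d/k − 1)·‖x‖², where ‖·‖ is the Euclidean norm on ℝ^d. -/
/-! Masking is an orthogonal projection, so `⟪mask ω x, x⟫ = ‖mask ω x‖²` and
`‖c • mask ω x - x‖² = (c² - 2c) ‖mask ω x‖² + ‖x‖²`. Double counting pairs `(ω, j)` with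
`j ∈ ω` shows that each coordinate lies in `C(d-1, k-1) = (k/d) C(d, k)` of the `k`-subsets, so
the average of `‖mask ω x‖²` is `(k/d) ‖x‖²`; with `c = d/k` the average error is
`(c² - 2c) (k/d) ‖x‖² + ‖x‖² = (c - 1) ‖x‖²`. -/

open Finset

namespace Finset

variable {α M : Type*} [DecidableEq α] [AddCommMonoid M]

theorem card_filter_mem_powersetCard {s : Finset α} {a : α} (ha : a ∈ s) {n : ℕ} (hn : 1 ≤ n) :
    #{t ∈ s.powersetCard n | a ∈ t} = (#s - 1).choose (n - 1) := by
  simpa using card_filter_powersetCard_subset {a} s n (singleton_subset_iff.2 ha) (by simpa)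

theorem sum_powersetCard_sum (s : Finset α) {n : ℕ} (hn : 1 ≤ n) (f : α → M) :
    ∑ t ∈ s.powersetCard n, ∑ a ∈ t, f a = (#s - 1).choose (n - 1) • ∑ a ∈ s, f a := by
  rw [sum_comm' (t' := s) (s' := fun a => {t ∈ s.powersetCard n | a ∈ t})]
  · rw [smul_sum]
    refine sum_congr rfl fun a ha => ?_
    rw [sum_const, card_filter_mem_powersetCard ha hn]
  · intro t a
    simp only [mem_filter, mem_powersetCard]
    exact ⟨fun h => ⟨h, h.1.1 h.2⟩, And.left⟩

theorem card_nsmul_sum_powersetCard_sum (s : Finset α) (n : ℕ) (f : α → M) :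
    #s • ∑ t ∈ s.powersetCard n, ∑ a ∈ t, f a = (n * (#s).choose n) • ∑ a ∈ s, f a := by
  rcases n with _ | n
  · simp
  rw [sum_powersetCard_sum s n.add_one_pos, smul_smul]
  rcases hs : #s with _ | m
  · simp [card_eq_zero.1 hs]
  rw [Nat.add_sub_cancel, Nat.add_sub_cancel, Nat.add_one_mul_choose_eq, mul_comm]

end Finset

variable {d : ℕ}

theorem norm_mask_sq (ω : Finset (Fin d)) (x : EuclideanSpace ℝ (Fin d)) :
    ‖mask ω x‖ ^ 2 = ∑ j ∈ ω, x j ^ 2 := by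
  simp [mask, EuclideanSpace.real_norm_sq_eq, apply_ite (· ^ 2)]

theorem real_inner_mask_self (ω : Finset (Fin d)) (x : EuclideanSpace ℝ (Fin d)) :
    inner ℝ (mask ω x) x = ‖mask ω x‖ ^ 2 := by
  rw [norm_mask_sq]
  simp [mask, PiLp.inner_apply, sq]

theorem norm_smul_mask_sub_sq (c : ℝ) (ω : Finset (Fin d)) (x : EuclideanSpace ℝ (Fin d)) :
    ‖c • mask ω x - x‖ ^ 2 = (c ^ 2 - 2 * c) * ‖mask ω x‖ ^ 2 + ‖x‖ ^ 2 := by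
  rw [norm_sub_sq_real, norm_smul, mul_pow, real_inner_smul_left, real_inner_mask_self,
    Real.norm_eq_abs, sq_abs]
  ring

theorem card_mul_sum_powersetCard_norm_mask_sq (k : ℕ) (x : EuclideanSpace ℝ (Fin d)) :
    d * ∑ ω ∈ powersetCard k univ, ‖mask ω x‖ ^ 2 = k * d.choose k * ‖x‖ ^ 2 := by
  simp_rw [norm_mask_sq, EuclideanSpace.real_norm_sq_eq]
  simpa using card_nsmul_sum_powersetCard_sum (univ : Finset (Fin d)) k (fun j => x j ^ 2)

theorem randk_scaled_error_general (d k : ℕ) (hk1 : 1 ≤ k) (hkd : k ≤ d)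
    (x : EuclideanSpace ℝ (Fin d)) :
    ((d.choose k : ℝ))⁻¹ *
      ∑ ω ∈ Finset.powersetCard k (Finset.univ : Finset (Fin d)),
        ‖((d : ℝ) / k) • mask ω x - x‖ ^ 2 = ((d : ℝ) / k - 1) * ‖x‖ ^ 2 := by
  simp_rw [norm_smul_mask_sub_sq, sum_add_distrib, ← mul_sum, sum_const, card_powersetCard,
    card_univ, Fintype.card_fin, nsmul_eq_mul]
  have hmean := card_mul_sum_powersetCard_norm_mask_sq k x
  have hchoose : (d.choose k : ℝ) ≠ 0 := by exact_mod_cast (Nat.choose_pos hkd).ne'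
  have hk : (k : ℝ) ≠ 0 := by exact_mod_cast (by omega : k ≠ 0)
  have hd : (d : ℝ) ≠ 0 := by exact_mod_cast (by omega : d ≠ 0)
  field_simp
  linear_combination (d - 2 * k : ℝ) * hmean

/-- The expected squared Euclidean error of the scaled random sparsifier:
`(1 / C(d,k)) · Σ_{|ω| = k} ‖(d/k)·mask_ω(x) − x‖² = (d/k − 1)·‖x‖²`. -/
theorem randk_scaled_error (d k : ℕ) (hd : 1 ≤ d) (hk1 : 1 ≤ k) (hkd : k ≤ d)
    (x : EuclideanSpace ℝ (Fin d)) :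
    ((d.choose k : ℝ))⁻¹ *
      ∑ ω ∈ Finset.powersetCard k (Finset.univ : Finset (Fin d)),
        ‖((d : ℝ) / k) • mask ω x - x‖ ^ 2 = ((d : ℝ) / k - 1) * ‖x‖ ^ 2 :=
  randk_scaled_error_general d k hk1 hkd x
end

section
/- Let d ≥ 1 and 1 ≤ k ≤ d be integers, let x ∈ ℝ^d, and let S ⊆ {1,…,d} be a top-k coordinate set for x. Then the top-k error is at most the average rand_k error: ‖mask_S(x) − x‖² ≤ (1 / C(d,k)) · Σ_{ω ⊆ {1,…,d}, |ω| = k} ‖mask_ω(x) − x‖², where the sum ranges over all k-element subsets ω of {1,…,d} and ‖·‖ is the Euclidean norm. -/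
open Finset

namespace Finset

variable {ι M : Type*} [AddCommMonoid M] [LinearOrder M] [IsOrderedAddMonoid M]
  {f : ι → M}

theorem sum_le_sum_of_card_eq_of_forall_le {s t : Finset ι} (hst : #s = #t)
    (h : ∀ i ∈ s, ∀ j ∈ t, f i ≤ f j) : ∑ i ∈ s, f i ≤ ∑ j ∈ t, f j := by
  obtain rfl | ht := t.eq_empty_or_nonempty
  · simp [card_eq_zero.mp hst]
  obtain ⟨j₀, hj₀, hmin⟩ := t.exists_min_image f ht
  calc ∑ i ∈ s, f i ≤ #s • f j₀ := sum_le_card_nsmul _ _ _ fun i hi ↦ h i hi j₀ hj₀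
    _ = #t • f j₀ := by rw [hst]
    _ ≤ ∑ j ∈ t, f j := card_nsmul_le_sum _ _ _ hmin

theorem sum_compl_le_sum_compl_of_card_eq [DecidableEq ι] [Fintype ι] {s t : Finset ι}
    (hts : #t = #s) (htop : ∀ i ∈ s, ∀ j ∉ s, f j ≤ f i) :
    ∑ i ∈ sᶜ, f i ≤ ∑ i ∈ tᶜ, f i := by
  rw [← sum_inter_add_sum_sdiff sᶜ tᶜ, ← sum_inter_add_sum_sdiff tᶜ sᶜ, inter_comm,
    compl_sdiff_compl, compl_sdiff_compl]
  gcongr _ + ?_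
  exact sum_le_sum_of_card_eq_of_forall_le (card_sdiff_comm hts)
    fun j hj i hi ↦ htop i (mem_sdiff.mp hi).1 j (mem_sdiff.mp hj).2

end Finset

theorem topk_error_le_randk_error_general (d k : ℕ)
    (x : EuclideanSpace ℝ (Fin d)) (S : Finset (Fin d)) (hS : S.card = k)
    (htop : ∀ i ∈ S, ∀ j ∉ S, |x j| ≤ |x i|) :
    ‖mask S x - x‖ ^ 2 ≤
      ((d.choose k : ℝ))⁻¹ *
        ∑ ω ∈ Finset.powersetCard k (Finset.univ : Finset (Fin d)),
          ‖mask ω x - x‖ ^ 2 := by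
  have hS_mem : S ∈ powersetCard k (univ : Finset (Fin d)) :=
    mem_powersetCard.mpr ⟨subset_univ S, hS⟩
  have hle : ∀ ω ∈ powersetCard k (univ : Finset (Fin d)),
      ‖mask S x - x‖ ^ 2 ≤ ‖mask ω x - x‖ ^ 2 := by
    intro ω hω
    simp only [norm_mask_sub_sq]
    exact sum_compl_le_sum_compl_of_card_eq ((mem_powersetCard.mp hω).2.trans hS.symm)
      fun i hi j hj ↦ sq_le_sq.mpr (htop i hi j hj)
  have hmean := le_expect ⟨S, hS_mem⟩ hle
  rwa [expect_eq_sum_div_card, card_powersetCard, card_univ, Fintype.card_fin,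
    div_eq_inv_mul] at hmean

/-- For a top-`k` coordinate set `S` of `x`, the top-`k` error is at most the average
rand-`k` error: `‖mask_S(x) − x‖² ≤ (1 / C(d,k)) · Σ_{|ω| = k} ‖mask_ω(x) − x‖²`. -/
theorem topk_error_le_randk_error (d k : ℕ) (hd : 1 ≤ d) (hk1 : 1 ≤ k) (hkd : k ≤ d)
    (x : EuclideanSpace ℝ (Fin d)) (S : Finset (Fin d)) (hS : S.card = k)
    (htop : ∀ i ∈ S, ∀ j ∉ S, |x j| ≤ |x i|) :
    ‖mask S x - x‖ ^ 2 ≤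
      ((d.choose k : ℝ))⁻¹ *
        ∑ ω ∈ Finset.powersetCard k (Finset.univ : Finset (Fin d)),
          ‖mask ω x - x‖ ^ 2 :=
  topk_error_le_randk_error_general d k x S hS htop
end

section
/- Let 0 < δ < 1, let ε be a real number with 0 < ε < 2·log(1/δ), let q ∈ (0,1], let T ≥ 1 be an integer, and let σ > 0 satisfy σ² ≥ 7·q²·T·(ε + 2·log(1/δ))/ε². Define α := 1 + 2·log(1/δ)/ε. Then 3.5·q²·T·α/σ² + log(1/δ)/(α − 1) ≤ ε. -/
/-- Arithmetic core of the privacy accounting for Fed-SMP: if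
`σ² ≥ 7·q²·T·(ε + 2·log(1/δ))/ε²` and `α := 1 + 2·log(1/δ)/ε`, then
`3.5·q²·T·α/σ² + log(1/δ)/(α − 1) ≤ ε`. -/
theorem fedsmp_privacy_arith (δ ε q σ : ℝ) (T : ℕ)
    (hδ0 : 0 < δ) (hδ1 : δ < 1)
    (hε0 : 0 < ε) (hε : ε < 2 * Real.log (1 / δ))
    (hq0 : 0 < q) (hq1 : q ≤ 1)
    (hT : 1 ≤ T)
    (hσ0 : 0 < σ)
    (hσ : σ ^ 2 ≥ 7 * q ^ 2 * T * (ε + 2 * Real.log (1 / δ)) / ε ^ 2) :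
    3.5 * q ^ 2 * T * (1 + 2 * Real.log (1 / δ) / ε) / σ ^ 2 +
      Real.log (1 / δ) / ((1 + 2 * Real.log (1 / δ) / ε) - 1) ≤ ε := by
  set L := Real.log (1 / δ) with hLdef
  have hL : 0 < L := Real.log_pos (by rw [lt_div_iff₀ hδ0]; linarith)
  have hσ2 : 0 < σ ^ 2 := by positivity
  have hT' : (1 : ℝ) ≤ (T : ℝ) := by exact_mod_cast hT
  have hα : 0 < ε + 2 * L := by linarith
  -- second term equals ε/2
  have h2 : L / ((1 + 2 * L / ε) - 1) = ε / 2 := by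
    field_simp
    ring
  rw [h2]
  -- first term ≤ ε/2
  have h1 : 3.5 * q ^ 2 * T * (1 + 2 * L / ε) / σ ^ 2 ≤ ε / 2 := by
    rw [div_le_iff₀ hσ2]
    have key : 7 * q ^ 2 * T * (ε + 2 * L) / ε ≤ ε * σ ^ 2 := by
      have := mul_le_mul_of_nonneg_left hσ (le_of_lt hε0)
      calc 7 * q ^ 2 * T * (ε + 2 * L) / ε
          = ε * (7 * q ^ 2 * T * (ε + 2 * L) / ε ^ 2) := by
            field_simp
        _ ≤ ε * σ ^ 2 := this
    have heq : 3.5 * q ^ 2 * T * (1 + 2 * L / ε)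
        = (7 * q ^ 2 * T * (ε + 2 * L) / ε) / 2 := by
      field_simp; ring
    rw [heq]
    linarith
  linarith
end

section
/- Fix integers n ≥ 1, d ≥ 1, τ ≥ 2, constants L > 0, β ≥ 1, κ ≥ 0, ζ_1, …, ζ_n ≥ 0, a learning rate η with 0 < η ≤ 1/(3·τ·L), and a point θ ∈ ℝ^d. Let f_1, …, f_n : ℝ^d → ℝ be differentiable with L-Lipschitz gradients, set f := (1/n)·Σ_{i=1}^n f_i, and suppose the bounded-dissimilarity condition (1/n)·Σ_{i=1}^n ‖∇f_i(x)‖² ≤ β²·‖∇f(x)‖² + κ² holds for all x ∈ ℝ^d. On a probability space with a filtration (ℱ_s)_{s=0,…,τ}, let random vectors θ_i^s and g_i^s (for i = 1,…,n and s = 0,…,τ) satisfy: θ_i^0 = θ; θ_i^{s+1} = θ_i^s − η·g_i^s; θ_i^s is ℱ_s-measurable; E[g_i^s | ℱ_s] = ∇f_i(θ_i^s) almost surely; E‖g_i^s − ∇f_i(θ_i^s)‖² ≤ ζ_i²; and all θ_i^s, g_i^s are square-integrable. Then for every integer s with 0 ≤ s ≤ τ, (1/n)·Σ_{i=1}^n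 E‖θ − θ_i^s‖² ≤ 16·η²·τ²·β²·‖∇f(θ)‖² + 16·η²·τ²·κ² + 4·τ·η²·ζ̄², where ζ̄² := (1/n)·Σ_{i=1}^n ζ_i². -/
/-!
Unrolling the local updates gives `θ - θ_i^s = η Σ_{r<s} ∇f_i(θ_i^r) + η Σ_{r<s} ξ_i^r` with noise
`ξ_i^r = g_i^r - ∇f_i(θ_i^r)`. The noise terms are martingale differences, hence orthogonal in
`L²`, so `E‖Σ_{r<s} ξ_i^r‖² ≤ s ζ_i²`; the drift is handled by Cauchy–Schwarz and by smoothness,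
`‖∇f_i(θ_i^r)‖² ≤ 2‖∇f_i(θ)‖² + 2L²‖θ - θ_i^r‖²`. Averaging over the clients and using bounded
dissimilarity, the mean divergence `D_s` satisfies `D_s ≤ A + 4η²τL² Σ_{r<s} D_r`. Since
`4η²τ²L² ≤ 4/9`, the claimed bound `B` satisfies `A + (4/9) B ≤ B`, and strong induction on `s`
propagates `D_s ≤ B`.
-/

open MeasureTheory Finset
open scoped NNReal RealInnerProductSpace

section Norms
variable {F F' : Type*} [NormedAddCommGroup F] [NormedAddCommGroup F']

lemma norm_add_sq_le_two_mul (a b : F) : ‖a + b‖ ^ 2 ≤ 2 * (‖a‖ ^ 2 + ‖b‖ ^ 2) :=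
  (pow_le_pow_left₀ (norm_nonneg _) (norm_add_le a b) 2).trans add_sq_le

lemma norm_sum_sq_le_card_mul_sum_sq {ι : Type*} (s : Finset ι) (v : ι → F) :
    ‖∑ i ∈ s, v i‖ ^ 2 ≤ #s * ∑ i ∈ s, ‖v i‖ ^ 2 :=
  (pow_le_pow_left₀ (norm_nonneg _) (norm_sum_le s v) 2).trans sq_sum_le_card_mul_sum_sq

lemma LipschitzWith.sq_norm_le {K : ℝ≥0} {G : F → F'} (hG : LipschitzWith K G) (x y : F) :
    ‖G x‖ ^ 2 ≤ 2 * (‖G y‖ ^ 2 + K ^ 2 * ‖y - x‖ ^ 2) := by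
  have hxy : ‖G x‖ ≤ ‖G y‖ + K * ‖y - x‖ := by
    have hlip := hG.norm_sub_le y x
    have htri := norm_le_norm_add_norm_sub' (G x) (G y)
    rw [norm_sub_rev] at htri
    linarith
  calc ‖G x‖ ^ 2 ≤ (‖G y‖ + K * ‖y - x‖) ^ 2 := pow_le_pow_left₀ (norm_nonneg _) hxy 2
    _ ≤ 2 * (‖G y‖ ^ 2 + (K * ‖y - x‖) ^ 2) := add_sq_le
    _ = 2 * (‖G y‖ ^ 2 + K ^ 2 * ‖y - x‖ ^ 2) := by ring

lemma LipschitzWith.memLp_comp {Ω : Type*} {mΩ : MeasurableSpace Ω} {μ : Measure Ω}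
    [IsFiniteMeasure μ] {K : ℝ≥0} {G : F → F'} (hG : LipschitzWith K G) {X : Ω → F}
    {p : ENNReal} (hX : MemLp X p μ) : MemLp (fun ω => G (X ω)) p μ := by
  have hconst : MemLp (fun _ => ‖G 0‖) p μ := memLp_const _
  have hbound : MemLp (fun ω => ‖G 0‖ + K * ‖X ω‖) p μ := hconst.add (hX.norm.const_mul _)
  have hGX : AEStronglyMeasurable (fun ω => G (X ω)) μ :=
    hG.continuous.comp_aestronglyMeasurable hX.1
  refine hbound.of_le hGX (ae_of_all _ fun ω => ?_)
  have hlip := hG.norm_sub_le (X ω) 0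
  rw [sub_zero] at hlip
  have htri := norm_le_norm_add_norm_sub' (G (X ω)) (G 0)
  rw [Real.norm_of_nonneg (by positivity)]
  linarith

end Norms

lemma le_of_le_add_mul_sum {D : ℕ → ℝ} {A b B : ℝ} {τ : ℕ} (hb : 0 ≤ b) (hB0 : 0 ≤ B)
    (hB : A + b * τ * B ≤ B) (hD : ∀ s ≤ τ, D s ≤ A + b * ∑ r ∈ range s, D r) :
    ∀ s ≤ τ, D s ≤ B := by
  intro s
  induction s using Nat.strong_induction_on with
  | _ s ih =>
    intro hs
    have hsum : ∑ r ∈ range s, D r ≤ τ * B := by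
      calc ∑ r ∈ range s, D r ≤ ∑ _r ∈ range s, B :=
            sum_le_sum fun r hr => ih r (mem_range.mp hr) (by grind)
        _ = s * B := by rw [sum_const, card_range, nsmul_eq_mul]
        _ ≤ τ * B := by gcongr
    calc D s ≤ A + b * ∑ r ∈ range s, D r := hD s hs
      _ ≤ A + b * (τ * B) := by gcongr
      _ ≤ B := by linarith

section Orthogonality
variable {Ω E : Type*} {m mΩ : MeasurableSpace Ω} {μ : Measure Ω}
  [NormedAddCommGroup E] [InnerProductSpace ℝ E]

lemma MeasureTheory.MemLp.integrable_inner {X Y : Ω → E} (hX : MemLp X 2 μ) (hY : MemLp Y 2 μ) :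
    Integrable (fun ω => ⟪X ω, Y ω⟫) μ :=
  memLp_one_iff_integrable.1 <| (innerSL ℝ (E := E)).memLp_of_bilin 1 hX hY

variable [CompleteSpace E] [IsFiniteMeasure μ]

lemma integral_inner_eq_zero_of_condExp_eq_zero (hm : m ≤ mΩ) {Y Z : Ω → E}
    (hYm : StronglyMeasurable[m] Y) (hY : MemLp Y 2 μ) (hZ : MemLp Z 2 μ)
    (hZ0 : μ[Z|m] =ᵐ[μ] 0) :
    ∫ ω, ⟪Y ω, Z ω⟫ ∂μ = 0 := by
  have hpull : μ[fun ω => ⟪Y ω, Z ω⟫|m] =ᵐ[μ] 0 := by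
    have h : μ[fun ω => ⟪Y ω, Z ω⟫|m] =ᵐ[μ] fun ω => ⟪Y ω, μ[Z|m] ω⟫ :=
      condExp_bilin_of_stronglyMeasurable_left (innerSL ℝ) hYm
        (hY.integrable_inner hZ) (hZ.integrable one_le_two)
    filter_upwards [h, hZ0] with ω hω hω0
    rw [hω, hω0, Pi.zero_apply, inner_zero_right, Pi.zero_apply]
  rw [← integral_condExp hm, integral_congr_ae hpull]
  simp

lemma integral_norm_sum_sq_eq_sum_of_condExp_eq_zero (ℱ : Filtration ℕ mΩ)
    {X : ℕ → Ω → E} {s : ℕ}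
    (hXm : ∀ r < s, StronglyMeasurable[ℱ (r + 1)] (X r))
    (hX : ∀ r < s, MemLp (X r) 2 μ)
    (hX0 : ∀ r < s, μ[X r|ℱ r] =ᵐ[μ] 0) :
    ∫ ω, ‖∑ r ∈ range s, X r ω‖ ^ 2 ∂μ = ∑ r ∈ range s, ∫ ω, ‖X r ω‖ ^ 2 ∂μ := by
  induction s with
  | zero => simp
  | succ s ih =>
    have hS : MemLp (fun ω => ∑ r ∈ range s, X r ω) 2 μ :=
      memLp_finsetSum _ fun r hr => hX r (by grind)
    have hSm : StronglyMeasurable[ℱ s] (fun ω => ∑ r ∈ range s, X r ω) :=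
      Finset.stronglyMeasurable_fun_sum _ fun r hr =>
        (hXm r (by grind)).mono (ℱ.mono (mem_range.mp hr))
    have hXs := hX s s.lt_succ_self
    have hcross : ∫ ω, ⟪∑ r ∈ range s, X r ω, X s ω⟫ ∂μ = 0 :=
      integral_inner_eq_zero_of_condExp_eq_zero (ℱ.le s) hSm hS hXs (hX0 s s.lt_succ_self)
    have hIS := hS.norm.integrable_sq
    have hII := (hS.integrable_inner hXs).const_mul 2
    simp_rw [sum_range_succ, norm_add_sq_real]
    rw [integral_add (hIS.fun_add hII) hXs.norm.integrable_sq, integral_add hIS hII,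
      integral_const_mul, hcross,
      ih (fun r _ => hXm r (by omega)) (fun r _ => hX r (by omega))
        (fun r _ => hX0 r (by omega))]
    ring

end Orthogonality

section LocalSGD
variable {Ω E : Type*} {mΩ : MeasurableSpace Ω} {μ : Measure Ω}
  [NormedAddCommGroup E] [InnerProductSpace ℝ E] {ℱ : Filtration ℕ mΩ} {G : E → E} {η : ℝ}
  {τ : ℕ} {θ : E} {x g : ℕ → Ω → E}

structure IsLocalSGD (μ : Measure Ω) (ℱ : Filtration ℕ mΩ) (G : E → E) (η : ℝ) (τ : ℕ) (θ : E)
    (x g : ℕ → Ω → E) : Prop where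
  init : x 0 = fun _ => θ
  update : ∀ s < τ, x (s + 1) = fun ω => x s ω - η • g s ω
  adapted : ∀ s ≤ τ, StronglyMeasurable[ℱ s] (x s)
  unbiased : ∀ s < τ, μ[g s|ℱ s] =ᵐ[μ] fun ω => G (x s ω)
  memLp_iterate : ∀ s ≤ τ, MemLp (x s) 2 μ
  memLp_oracle : ∀ s < τ, MemLp (g s) 2 μ

namespace IsLocalSGD

lemma sub_eq_smul_sum (h : IsLocalSGD μ ℱ G η τ θ x g) :
    ∀ s ≤ τ, ∀ ω, θ - x s ω = η • ∑ r ∈ range s, g r ω := by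
  intro s
  induction s with
  | zero => simp [h.init]
  | succ s ih =>
    intro hs ω
    rw [h.update s hs, sum_range_succ, smul_add, ← ih (by omega) ω, sub_sub_eq_add_sub,
      add_sub_right_comm]

lemma stronglyMeasurable_oracle (h : IsLocalSGD μ ℱ G η τ θ x g) (hη : η ≠ 0) :
    ∀ s < τ, StronglyMeasurable[ℱ (s + 1)] (g s) := by
  intro s hs
  have hg : g s = fun ω => η⁻¹ • (x s ω - x (s + 1) ω) := by
    funext ω
    rw [h.update s hs, sub_sub_cancel, smul_smul, inv_mul_cancel₀ hη, one_smul]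
  rw [hg]
  exact (((h.adapted s hs.le).mono (ℱ.mono s.le_succ)).sub (h.adapted (s + 1) hs)).const_smul _

section FiniteMeasure
variable [IsFiniteMeasure μ] {K : ℝ≥0}

lemma integrable_norm_sub_sq (h : IsLocalSGD μ ℱ G η τ θ x g) :
    ∀ s ≤ τ, Integrable (fun ω => ‖θ - x s ω‖ ^ 2) μ := fun s hs => by
  have hθ : MemLp (fun _ => θ) 2 μ := memLp_const θ
  exact (hθ.sub (h.memLp_iterate s hs)).norm.integrable_sq

lemma memLp_comp_iterate (h : IsLocalSGD μ ℱ G η τ θ x g) (hG : LipschitzWith K G) :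
    ∀ s ≤ τ, MemLp (fun ω => G (x s ω)) 2 μ :=
  fun s hs => hG.memLp_comp (h.memLp_iterate s hs)

variable [CompleteSpace E]

lemma condExp_noise_eq_zero (h : IsLocalSGD μ ℱ G η τ θ x g) (hG : LipschitzWith K G) :
    ∀ s < τ, μ[fun ω => g s ω - G (x s ω)|ℱ s] =ᵐ[μ] 0 := by
  intro s hs
  have hGx := h.memLp_comp_iterate hG s hs.le
  have hGx_eq : μ[fun ω => G (x s ω)|ℱ s] = fun ω => G (x s ω) :=
    condExp_of_stronglyMeasurable (ℱ.le s)
      (hG.continuous.comp_stronglyMeasurable (h.adapted s hs.le)) (hGx.integrable one_le_two)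
  have hsub : μ[fun ω => g s ω - G (x s ω)|ℱ s] =ᵐ[μ] μ[g s|ℱ s] - μ[fun ω => G (x s ω)|ℱ s] :=
    condExp_sub ((h.memLp_oracle s hs).integrable one_le_two) (hGx.integrable one_le_two) _
  filter_upwards [hsub, h.unbiased s hs] with ω hsub hunb
  rw [hsub, Pi.sub_apply, hGx_eq, hunb, sub_self, Pi.zero_apply]

lemma integral_norm_sum_noise_sq (h : IsLocalSGD μ ℱ G η τ θ x g) (hη : η ≠ 0)
    (hG : LipschitzWith K G) :
    ∀ s ≤ τ, ∫ ω, ‖∑ r ∈ range s, (g r ω - G (x r ω))‖ ^ 2 ∂μ =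
      ∑ r ∈ range s, ∫ ω, ‖g r ω - G (x r ω)‖ ^ 2 ∂μ := fun s hs =>
  integral_norm_sum_sq_eq_sum_of_condExp_eq_zero ℱ
    (fun r hr => (h.stronglyMeasurable_oracle hη r (by omega)).sub
      ((hG.continuous.comp_stronglyMeasurable (h.adapted r (by omega))).mono (ℱ.mono r.le_succ)))
    (fun r hr => (h.memLp_oracle r (by omega)).sub (h.memLp_comp_iterate hG r (by omega)))
    (fun r hr => h.condExp_noise_eq_zero hG r (by omega))

lemma integral_norm_sub_sq_le (h : IsLocalSGD μ ℱ G η τ θ x g) (hη : η ≠ 0)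
    (hG : LipschitzWith K G) :
    ∀ s ≤ τ, ∫ ω, ‖θ - x s ω‖ ^ 2 ∂μ ≤
      2 * η ^ 2 * (s * ∑ r ∈ range s, ∫ ω, ‖G (x r ω)‖ ^ 2 ∂μ +
        ∑ r ∈ range s, ∫ ω, ‖g r ω - G (x r ω)‖ ^ 2 ∂μ) := by
  intro s hs
  set N : Ω → E := fun ω => ∑ r ∈ range s, (g r ω - G (x r ω)) with hN
  have hpt : ∀ ω, ‖θ - x s ω‖ ^ 2 ≤
      2 * η ^ 2 * (s * ∑ r ∈ range s, ‖G (x r ω)‖ ^ 2 + ‖N ω‖ ^ 2) := by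
    intro ω
    have hsplit : θ - x s ω = η • (∑ r ∈ range s, G (x r ω) + N ω) := by
      rw [h.sub_eq_smul_sum s hs ω, hN, ← sum_add_distrib]
      simp only [add_sub_cancel]
    calc ‖θ - x s ω‖ ^ 2 = η ^ 2 * ‖∑ r ∈ range s, G (x r ω) + N ω‖ ^ 2 := by
          rw [hsplit, norm_smul, mul_pow, Real.norm_eq_abs, sq_abs]
      _ ≤ η ^ 2 * (2 * (‖∑ r ∈ range s, G (x r ω)‖ ^ 2 + ‖N ω‖ ^ 2)) := by
          gcongr; exact norm_add_sq_le_two_mul _ _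
      _ ≤ η ^ 2 * (2 * (s * ∑ r ∈ range s, ‖G (x r ω)‖ ^ 2 + ‖N ω‖ ^ 2)) := by
          gcongr; simpa using norm_sum_sq_le_card_mul_sum_sq (range s) fun r => G (x r ω)
      _ = _ := by ring
  have hIG : ∀ r ∈ range s, Integrable (fun ω => ‖G (x r ω)‖ ^ 2) μ := fun r hr =>
    (h.memLp_comp_iterate hG r (by grind)).norm.integrable_sq
  have hIN : Integrable (fun ω => ‖N ω‖ ^ 2) μ :=
    (memLp_finsetSum _ fun r hr => (h.memLp_oracle r (by grind)).sub
      (h.memLp_comp_iterate hG r (by grind))).norm.integrable_sq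
  have hIsum := (integrable_finsetSum _ hIG).const_mul (s : ℝ)
  calc ∫ ω, ‖θ - x s ω‖ ^ 2 ∂μ
      ≤ ∫ ω, 2 * η ^ 2 * (s * ∑ r ∈ range s, ‖G (x r ω)‖ ^ 2 + ‖N ω‖ ^ 2) ∂μ :=
        integral_mono (h.integrable_norm_sub_sq s hs) ((hIsum.fun_add hIN).const_mul _) hpt
    _ = 2 * η ^ 2 * (s * ∑ r ∈ range s, ∫ ω, ‖G (x r ω)‖ ^ 2 ∂μ + ∫ ω, ‖N ω‖ ^ 2 ∂μ) := by
        rw [integral_const_mul, integral_add hIsum hIN, integral_const_mul,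
          integral_finsetSum _ hIG]
    _ = _ := by rw [h.integral_norm_sum_noise_sq hη hG s hs]

end FiniteMeasure

lemma integral_norm_sub_sq_le_of_variance_le [IsProbabilityMeasure μ] [CompleteSpace E]
    {K : ℝ≥0} (h : IsLocalSGD μ ℱ G η τ θ x g) (hη : η ≠ 0) (hG : LipschitzWith K G) {σ : ℝ}
    (hvar : ∀ s < τ, ∫ ω, ‖g s ω - G (x s ω)‖ ^ 2 ∂μ ≤ σ ^ 2) :
    ∀ s ≤ τ, ∫ ω, ‖θ - x s ω‖ ^ 2 ∂μ ≤
      2 * η ^ 2 * τ *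
        (∑ r ∈ range s, 2 * (‖G θ‖ ^ 2 + K ^ 2 * ∫ ω, ‖θ - x r ω‖ ^ 2 ∂μ) + σ ^ 2) := by
  intro s hs
  have hgrad : ∀ r ≤ τ, ∫ ω, ‖G (x r ω)‖ ^ 2 ∂μ ≤
      2 * (‖G θ‖ ^ 2 + K ^ 2 * ∫ ω, ‖θ - x r ω‖ ^ 2 ∂μ) := fun r hr => by
    have hI := (h.integrable_norm_sub_sq r hr).const_mul ((K : ℝ) ^ 2)
    calc ∫ ω, ‖G (x r ω)‖ ^ 2 ∂μ
        ≤ ∫ ω, 2 * (‖G θ‖ ^ 2 + K ^ 2 * ‖θ - x r ω‖ ^ 2) ∂μ :=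
          integral_mono (h.memLp_comp_iterate hG r hr).norm.integrable_sq
            (((integrable_const _).fun_add hI).const_mul _) fun ω => hG.sq_norm_le (x r ω) θ
      _ = 2 * (‖G θ‖ ^ 2 + K ^ 2 * ∫ ω, ‖θ - x r ω‖ ^ 2 ∂μ) := by
          rw [integral_const_mul, integral_add (integrable_const _) hI, integral_const,
            probReal_univ, one_smul, integral_const_mul]
  have hs' : (s : ℝ) ≤ τ := by exact_mod_cast hs
  calc ∫ ω, ‖θ - x s ω‖ ^ 2 ∂μ
      ≤ 2 * η ^ 2 * (s * ∑ r ∈ range s, ∫ ω, ‖G (x r ω)‖ ^ 2 ∂μ +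
          ∑ r ∈ range s, ∫ ω, ‖g r ω - G (x r ω)‖ ^ 2 ∂μ) := h.integral_norm_sub_sq_le hη hG s hs
    _ ≤ 2 * η ^ 2 * (τ * ∑ r ∈ range s, 2 * (‖G θ‖ ^ 2 + K ^ 2 * ∫ ω, ‖θ - x r ω‖ ^ 2 ∂μ) +
          ∑ _r ∈ range s, σ ^ 2) := by
        gcongr with r hr
        · exact hgrad r (by grind)
        · exact hvar r (by grind)
    _ ≤ 2 * η ^ 2 * (τ * ∑ r ∈ range s, 2 * (‖G θ‖ ^ 2 + K ^ 2 * ∫ ω, ‖θ - x r ω‖ ^ 2 ∂μ) +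
          τ * σ ^ 2) := by
        rw [sum_const, card_range, nsmul_eq_mul]
        gcongr
    _ = _ := by ring

lemma average_integral_norm_sub_sq_le [IsProbabilityMeasure μ] [CompleteSpace E] {ι : Type*}
    [Fintype ι] {G : ι → E → E} {x g : ι → ℕ → Ω → E} {K : ℝ≥0} {σ : ι → ℝ} {c H : ℝ}
    (h : ∀ i, IsLocalSGD μ ℱ (G i) η τ θ (x i) (g i)) (hη : η ≠ 0)
    (hG : ∀ i, LipschitzWith K (G i))
    (hvar : ∀ i, ∀ s < τ, ∫ ω, ‖g i s ω - G i (x i s ω)‖ ^ 2 ∂μ ≤ σ i ^ 2)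
    (hc : 0 ≤ c) (hH : c * ∑ i, ‖G i θ‖ ^ 2 ≤ H) :
    ∀ s ≤ τ, c * ∑ i, ∫ ω, ‖θ - x i s ω‖ ^ 2 ∂μ ≤
      2 * η ^ 2 * τ * (2 * τ * H + c * ∑ i, σ i ^ 2) +
        4 * η ^ 2 * τ * K ^ 2 * ∑ r ∈ range s, c * ∑ i, ∫ ω, ‖θ - x i r ω‖ ^ 2 ∂μ := by
  intro s hs
  set D : ℕ → ℝ := fun r => c * ∑ i, ∫ ω, ‖θ - x i r ω‖ ^ 2 ∂μ
  have hH0 : 0 ≤ H := (by positivity : 0 ≤ c * ∑ i, ‖G i θ‖ ^ 2).trans hH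
  calc D s ≤ c * ∑ i, 2 * η ^ 2 * τ * (∑ r ∈ range s, 2 * (‖G i θ‖ ^ 2 +
        K ^ 2 * ∫ ω, ‖θ - x i r ω‖ ^ 2 ∂μ) + σ i ^ 2) := by
        dsimp only [D]
        gcongr with i
        exact (h i).integral_norm_sub_sq_le_of_variance_le hη (hG i) (hvar i) s hs
    _ = 2 * η ^ 2 * τ * (∑ r ∈ range s, 2 * (c * ∑ i, ‖G i θ‖ ^ 2 + K ^ 2 * D r) +
        c * ∑ i, σ i ^ 2) := by
        simp only [D, mul_sum, mul_add, sum_add_distrib, mul_left_comm]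
        congr 2 <;> exact sum_comm
    _ ≤ 2 * η ^ 2 * τ * (∑ r ∈ range s, 2 * (H + K ^ 2 * D r) + c * ∑ i, σ i ^ 2) := by
        gcongr
    _ = 2 * η ^ 2 * τ * (2 * s * H + c * ∑ i, σ i ^ 2) +
        4 * η ^ 2 * τ * K ^ 2 * ∑ r ∈ range s, D r := by
        simp only [mul_add, sum_add_distrib, sum_const, card_range, nsmul_eq_mul, ← mul_sum]
        ring
    _ ≤ _ := by gcongr

end IsLocalSGD
end LocalSGD


theorem bounded_local_divergence_general {Ω : Type*} {mΩ : MeasurableSpace Ω}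
    (P : Measure Ω) [IsProbabilityMeasure P]
    (n d τ : ℕ)
    (L β κ η : ℝ) (ζ : Fin n → ℝ)
    (hη0 : 0 < η) (hη : η ≤ 1 / (3 * τ * L))
    (θ : EuclideanSpace ℝ (Fin d))
    (f : Fin n → EuclideanSpace ℝ (Fin d) → ℝ)
    (hlip : ∀ i, LipschitzWith (Real.toNNReal L) (gradient (f i)))
    (hdissim : ∀ x : EuclideanSpace ℝ (Fin d),
      (1 / (n : ℝ)) * ∑ i, ‖gradient (f i) x‖ ^ 2 ≤
        β ^ 2 * ‖gradient (fun y => (1 / (n : ℝ)) * ∑ i, f i y) x‖ ^ 2 + κ ^ 2)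
    (ℱ : Filtration ℕ mΩ)
    (θ' g : Fin n → ℕ → Ω → EuclideanSpace ℝ (Fin d))
    (hinit : ∀ i, θ' i 0 = fun _ => θ)
    (hupdate : ∀ i, ∀ s < τ, θ' i (s + 1) = fun ω => θ' i s ω - η • g i s ω)
    (hmeas : ∀ i, ∀ s ≤ τ, StronglyMeasurable[ℱ s] (θ' i s))
    (hunbiased : ∀ i, ∀ s < τ,
      P[g i s|ℱ s] =ᵐ[P] fun ω => gradient (f i) (θ' i s ω))
    (hvar : ∀ i, ∀ s < τ,
      ∫ ω, ‖g i s ω - gradient (f i) (θ' i s ω)‖ ^ 2 ∂P ≤ (ζ i) ^ 2)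
    (hL2θ : ∀ i, ∀ s ≤ τ, MemLp (θ' i s) 2 P)
    (hL2g : ∀ i, ∀ s < τ, MemLp (g i s) 2 P) :
    ∀ s ≤ τ,
      (1 / (n : ℝ)) * ∑ i, ∫ ω, ‖θ - θ' i s ω‖ ^ 2 ∂P ≤
        16 * η ^ 2 * (τ : ℝ) ^ 2 * β ^ 2 *
            ‖gradient (fun y => (1 / (n : ℝ)) * ∑ i, f i y) θ‖ ^ 2
          + 16 * η ^ 2 * (τ : ℝ) ^ 2 * κ ^ 2
          + 4 * (τ : ℝ) * η ^ 2 * ((1 / (n : ℝ)) * ∑ i, (ζ i) ^ 2) := by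
  have hτL : 0 < 3 * τ * L := one_div_pos.mp (hη0.trans_le hη)
  have hL : 0 < L := pos_of_mul_pos_right hτL (by positivity)
  have hητL : η ^ 2 * τ ^ 2 * L ^ 2 ≤ 1 / 9 := by
    have h := (le_div_iff₀ hτL).mp hη
    nlinarith [mul_self_le_mul_self (by positivity : 0 ≤ η * (3 * τ * L)) h]
  have hrec := IsLocalSGD.average_integral_norm_sub_sq_le
    (fun i => ⟨hinit i, hupdate i, hmeas i, hunbiased i, hL2θ i, hL2g i⟩) hη0.ne' hlip hvar
    (by positivity) (hdissim θ)
  rw [Real.coe_toNNReal _ hL.le] at hrec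
  set c : ℝ := 1 / n
  set H := β ^ 2 * ‖gradient (fun y => c * ∑ i, f i y) θ‖ ^ 2 + κ ^ 2 with hH
  set Z := c * ∑ i, ζ i ^ 2
  have hB0 : 0 ≤ 16 * η ^ 2 * τ ^ 2 * H + 4 * τ * η ^ 2 * Z := by positivity
  have hB : 2 * η ^ 2 * τ * (2 * τ * H + Z) + 4 * η ^ 2 * τ * L ^ 2 * τ *
      (16 * η ^ 2 * τ ^ 2 * H + 4 * τ * η ^ 2 * Z) ≤
        16 * η ^ 2 * τ ^ 2 * H + 4 * τ * η ^ 2 * Z := by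
    have hH0 : 0 ≤ η ^ 2 * τ ^ 2 * H := by positivity
    have hZ0 : 0 ≤ η ^ 2 * τ * Z := by positivity
    nlinarith [mul_le_mul_of_nonneg_right hητL hB0]
  intro s hs
  exact (le_of_le_add_mul_sum (by positivity) hB0 hB hrec s hs).trans_eq (by rw [hH]; ring)

/-- Bounded Local Divergence lemma: under smoothness, bounded dissimilarity, conditionally
unbiased stochastic gradients with bounded variance, local SGD with learning rate
`η ≤ 1/(3τL)` satisfies, for every `0 ≤ s ≤ τ`,
`(1/n)·Σ_i E‖θ − θ_i^s‖² ≤ 16·η²·τ²·β²·‖∇f(θ)‖² + 16·η²·τ²·κ² + 4·τ·η²·ζ̄²`. -/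
theorem bounded_local_divergence {Ω : Type*} {mΩ : MeasurableSpace Ω}
    (P : Measure Ω) [IsProbabilityMeasure P]
    (n d τ : ℕ) (hn : 1 ≤ n) (hd : 1 ≤ d) (hτ : 2 ≤ τ)
    (L β κ η : ℝ) (ζ : Fin n → ℝ)
    (hL : 0 < L) (hβ : 1 ≤ β) (hκ : 0 ≤ κ) (hζ : ∀ i, 0 ≤ ζ i)
    (hη0 : 0 < η) (hη : η ≤ 1 / (3 * τ * L))
    (θ : EuclideanSpace ℝ (Fin d))
    (f : Fin n → EuclideanSpace ℝ (Fin d) → ℝ)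
    (hdiff : ∀ i, Differentiable ℝ (f i))
    (hlip : ∀ i, LipschitzWith (Real.toNNReal L) (gradient (f i)))
    (hdissim : ∀ x : EuclideanSpace ℝ (Fin d),
      (1 / (n : ℝ)) * ∑ i, ‖gradient (f i) x‖ ^ 2 ≤
        β ^ 2 * ‖gradient (fun y => (1 / (n : ℝ)) * ∑ i, f i y) x‖ ^ 2 + κ ^ 2)
    (ℱ : Filtration ℕ mΩ)
    (θ' g : Fin n → ℕ → Ω → EuclideanSpace ℝ (Fin d))
    (hinit : ∀ i, θ' i 0 = fun _ => θ)
    (hupdate : ∀ i, ∀ s < τ, θ' i (s + 1) = fun ω => θ' i s ω - η • g i s ω)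
    (hmeas : ∀ i, ∀ s ≤ τ, StronglyMeasurable[ℱ s] (θ' i s))
    (hunbiased : ∀ i, ∀ s < τ,
      P[g i s|ℱ s] =ᵐ[P] fun ω => gradient (f i) (θ' i s ω))
    (hvar : ∀ i, ∀ s < τ,
      ∫ ω, ‖g i s ω - gradient (f i) (θ' i s ω)‖ ^ 2 ∂P ≤ (ζ i) ^ 2)
    (hL2θ : ∀ i, ∀ s ≤ τ, MemLp (θ' i s) 2 P)
    (hL2g : ∀ i, ∀ s < τ, MemLp (g i s) 2 P) :
    ∀ s ≤ τ,
      (1 / (n : ℝ)) * ∑ i, ∫ ω, ‖θ - θ' i s ω‖ ^ 2 ∂P ≤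
        16 * η ^ 2 * (τ : ℝ) ^ 2 * β ^ 2 *
            ‖gradient (fun y => (1 / (n : ℝ)) * ∑ i, f i y) θ‖ ^ 2
          + 16 * η ^ 2 * (τ : ℝ) ^ 2 * κ ^ 2
          + 4 * (τ : ℝ) * η ^ 2 * ((1 / (n : ℝ)) * ∑ i, (ζ i) ^ 2) :=
  bounded_local_divergence_general P n d τ L β κ η ζ hη0 hη θ f hlip hdissim ℱ θ' g hinit hupdate
    hmeas hunbiased hvar hL2θ hL2g
end
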